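/- arXiv:2006.11466 — 5 statements merged into one kernel-verified Lean document; each statement's English description precedes it below -/
import Mathlib

section
/- If both the primal linear program min ⟨c,x⟩ subject to Ax = b, x ≥ 0 and its dual max ⟨b,w⟩ subject to Aᵀw + y = c, y ≥ 0 are feasible, then both problems have optimal solutions and their optimal objective values are equal. -/
open Matrix

/-- Primal feasibility: `Ax = b`, `x ≥ 0`. -/
def PrimalFeasible {m n : ℕ} (A : Matrix (Fin m) (Fin n) ℝ) (b : Fin m → ℝ)
    (x : Fin n → ℝ) : Prop :=
  A *ᵥ x = b ∧ 0 ≤ x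

/-- Dual feasibility: `Aᵀ w + y = c`, `y ≥ 0`. -/
def DualFeasible {m n : ℕ} (A : Matrix (Fin m) (Fin n) ℝ) (c : Fin n → ℝ)
    (w : Fin m → ℝ) (y : Fin n → ℝ) : Prop :=
  Aᵀ *ᵥ w + y = c ∧ 0 ≤ y

/-!
Strong duality follows from Farkas' lemma applied to the optimality system `A x = b`,
`Aᵀ w + y = c`, `⟪c, x⟫ = ⟪b, w⟫` in unknowns `x, y ≥ 0` and `w` free: any solution is a pair of
optimal solutions by weak duality. A Farkas certificate `(u, v, τ)` of infeasibility cannot exist: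
for `τ < 0`, `(v / τ, -u / τ)` is a primal-dual pair violating weak duality, and for `τ ≥ 0` pairing
the certificate with the given feasible points contradicts weak duality as well.

Farkas' lemma holds for finitely many generators in any vector space over an ordered field, by
induction on their number; free unknowns are absorbed by passing to the quotient by their range.
-/

open Module Finset

theorem exists_nonneg_sum_smul_insert_eq {R M ι : Type*} [Semiring R] [PartialOrder R]
    [AddCommMonoid M] [Module R M] [DecidableEq ι] {s : Finset ι} {a : ι} (ha : a ∉ s)
    {v : ι → M} {b : M} {x : ι → R} (hx : 0 ≤ x) {μ : R} (hμ : 0 ≤ μ)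
    (h : ∑ i ∈ s, x i • v i + μ • v a = b) :
    ∃ x' : ι → R, 0 ≤ x' ∧ ∑ i ∈ insert a s, x' i • v i = b := by
  refine ⟨Function.update x a μ, le_update_iff.2 ⟨hμ, fun i _ => hx i⟩, ?_⟩
  rw [sum_insert ha, Function.update_self, ← h, add_comm]
  congr 1
  exact sum_congr rfl fun i hi => by rw [Function.update_of_ne (ne_of_mem_of_not_mem hi ha)]

section Farkas

variable {𝕜 E ι : Type*} [Field 𝕜] [LinearOrder 𝕜] [IsStrictOrderedRing 𝕜]
  [AddCommGroup E] [Module 𝕜 E]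

theorem exists_nonneg_sum_smul_insert_eq_of_preReflection [DecidableEq ι] {s : Finset ι} {a : ι}
    (ha : a ∉ s) {v : ι → E} {b : E} {f : Dual 𝕜 E} (hfs : ∀ i ∈ s, f (v i) ≤ 0) (hfb : 0 < f b)
    {x : ι → 𝕜} (hx : 0 ≤ x)
    (h : ∑ i ∈ s, x i • preReflection (v a) f (v i) = preReflection (v a) f b) :
    ∃ x' : ι → 𝕜, 0 ≤ x' ∧ ∑ i ∈ insert a s, x' i • v i = b := by
  set r := b - ∑ i ∈ s, x i • v i
  have hr : preReflection (v a) f r = 0 := by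
    simp only [r, map_sub, map_sum, map_smul, h, sub_self]
  have hfr : 0 ≤ f r := by
    simp only [r, map_sub, map_sum, map_smul, smul_eq_mul]
    have := sum_nonpos fun i hi => mul_nonpos_of_nonneg_of_nonpos (hx i) (hfs i hi)
    linarith
  refine exists_nonneg_sum_smul_insert_eq ha hx hfr ?_
  rw [preReflection_apply, sub_eq_zero] at hr
  rw [← hr, add_sub_cancel]

theorem exists_nonneg_sum_smul_eq_or_exists_dual (s : Finset ι) (v : ι → E) (b : E) :
    (∃ x : ι → 𝕜, 0 ≤ x ∧ ∑ i ∈ s, x i • v i = b) ∨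
      ∃ f : Dual 𝕜 E, (∀ i ∈ s, f (v i) ≤ 0) ∧ 0 < f b := by
  classical
  induction s using Finset.induction_on generalizing v b with
  | empty =>
    by_cases hb : b = 0
    · exact Or.inl ⟨0, le_rfl, by simp [hb]⟩
    · obtain ⟨f, hf⟩ := Projective.exists_dual_eq_one 𝕜 hb
      exact Or.inr ⟨f, by simp, by simp [hf]⟩
  | @insert a s ha ih =>
    rcases ih v b with ⟨x, hx, hxb⟩ | ⟨f, hfs, hfb⟩
    · exact Or.inl (exists_nonneg_sum_smul_insert_eq ha hx le_rfl (by simpa using hxb))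
    by_cases hfa : f (v a) ≤ 0
    · exact Or.inr ⟨f, forall_mem_insert .. |>.2 ⟨hfa, hfs⟩, hfb⟩
    rw [not_le] at hfa
    -- `f` separates `b` from the smaller cone but not from `v a`: project along `v a` onto
    -- `ker f` and separate the projected data instead.
    set g := (f (v a))⁻¹ • f
    rcases ih (preReflection (v a) g ∘ v) (preReflection (v a) g b) with
      ⟨x, hx, hxb⟩ | ⟨h, hhs, hhb⟩
    · refine Or.inl (exists_nonneg_sum_smul_insert_eq_of_preReflection ha (fun i hi => ?_)
        (mul_pos (inv_pos.2 hfa) hfb) hx hxb)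
      exact mul_nonpos_of_nonneg_of_nonpos (inv_nonneg.2 hfa.le) (hfs i hi)
    · refine Or.inr ⟨h ∘ₗ preReflection (v a) g, forall_mem_insert .. |>.2 ⟨?_, hhs⟩, hhb⟩
      simp [g, preReflection_apply, hfa.ne']

theorem exists_nonneg_sum_smul_add_eq_or_exists_dual {F : Type*} [AddCommGroup F] [Module 𝕜 F]
    (s : Finset ι) (v : ι → E) (Q : F →ₗ[𝕜] E) (b : E) :
    (∃ x : ι → 𝕜, 0 ≤ x ∧ ∃ w, ∑ i ∈ s, x i • v i + Q w = b) ∨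
      ∃ f : Dual 𝕜 E, (∀ i ∈ s, f (v i) ≤ 0) ∧ f ∘ₗ Q = 0 ∧ 0 < f b := by
  set p := LinearMap.range Q
  rcases exists_nonneg_sum_smul_eq_or_exists_dual (𝕜 := 𝕜) s (p.mkQ ∘ v) (p.mkQ b) with
    ⟨x, hx, hxb⟩ | ⟨g, hgs, hgb⟩
  · simp only [Function.comp_apply, ← map_smul, ← map_sum] at hxb
    rw [← sub_eq_zero, ← map_sub, Submodule.mkQ_apply, Submodule.Quotient.mk_eq_zero] at hxb
    obtain ⟨w, hw⟩ := hxb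
    exact Or.inl ⟨x, hx, -w, by rw [map_neg, hw]; abel⟩
  · refine Or.inr ⟨g ∘ₗ p.mkQ, hgs, ?_, hgb⟩
    rw [LinearMap.comp_assoc, LinearMap.range_mkQ_comp, LinearMap.comp_zero]

end Farkas

theorem Matrix.transpose_mulVec_dotProduct {R ι κ : Type*} [CommSemiring R] [Fintype ι]
    [Fintype κ] (A : Matrix ι κ R) (w : ι → R) (x : κ → R) : Aᵀ *ᵥ w ⬝ᵥ x = w ⬝ᵥ A *ᵥ x := by
  rw [mulVec_transpose, dotProduct_mulVec]

section LP

variable {m n : ℕ} {A : Matrix (Fin m) (Fin n) ℝ} {b : Fin m → ℝ} {c : Fin n → ℝ}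

theorem dotProduct_eq_add_of_feasible {x : Fin n → ℝ} {w : Fin m → ℝ} {y : Fin n → ℝ}
    (hx : PrimalFeasible A b x) (hwy : DualFeasible A c w y) :
    c ⬝ᵥ x = b ⬝ᵥ w + y ⬝ᵥ x := by
  rw [← hwy.1, add_dotProduct, ← hx.1, transpose_mulVec_dotProduct, dotProduct_comm w]

theorem weak_duality {x : Fin n → ℝ} {w : Fin m → ℝ} {y : Fin n → ℝ}
    (hx : PrimalFeasible A b x) (hwy : DualFeasible A c w y) : b ⬝ᵥ w ≤ c ⬝ᵥ x := by
  rw [dotProduct_eq_add_of_feasible hx hwy]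
  exact le_add_of_nonneg_right (dotProduct_nonneg_of_nonneg hwy.2 hx.2)

theorem dotProduct_add_dotProduct_nonpos {x₀ : Fin n → ℝ} {w₀ : Fin m → ℝ} {y₀ : Fin n → ℝ}
    (hx₀ : PrimalFeasible A b x₀) (hwy₀ : DualFeasible A c w₀ y₀) {u : Fin m → ℝ}
    {v : Fin n → ℝ} {τ : ℝ} (hu : Aᵀ *ᵥ u + τ • c ≤ 0) (hv : v ≤ 0) (hAv : A *ᵥ v = τ • b) :
    b ⬝ᵥ u + c ⬝ᵥ v ≤ 0 := by
  have hu' : Aᵀ *ᵥ u ≤ -τ • c := by rwa [neg_smul, le_neg_iff_add_nonpos_right]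
  rcases le_or_gt 0 τ with hτ | hτ
  · have hbu : b ⬝ᵥ u ≤ -τ * c ⬝ᵥ x₀ := by
      rw [← hx₀.1, dotProduct_comm, ← transpose_mulVec_dotProduct, ← smul_eq_mul,
        ← smul_dotProduct]
      exact dotProduct_le_dotProduct_of_nonneg_right hu' hx₀.2
    have hcv : c ⬝ᵥ v ≤ τ * b ⬝ᵥ w₀ := by
      rw [← hwy₀.1, add_dotProduct, transpose_mulVec_dotProduct, hAv, dotProduct_smul,
        dotProduct_comm w₀, smul_eq_mul]
      have : y₀ ⬝ᵥ v ≤ 0 := by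
        simpa using dotProduct_le_dotProduct_of_nonneg_left hv hwy₀.2
      linarith
    nlinarith [weak_duality hx₀ hwy₀]
  · have hx : PrimalFeasible A b (τ⁻¹ • v) :=
      ⟨by rw [mulVec_smul, hAv, smul_smul, inv_mul_cancel₀ hτ.ne, one_smul],
        smul_nonneg_of_nonpos_of_nonpos (inv_nonpos.2 hτ.le) hv⟩
    have hwy : DualFeasible A c ((-τ)⁻¹ • u) (c - Aᵀ *ᵥ ((-τ)⁻¹ • u)) := by
      refine ⟨add_sub_cancel _ _, sub_nonneg.2 ?_⟩
      calc Aᵀ *ᵥ ((-τ)⁻¹ • u) ≤ (-τ)⁻¹ • (-τ • c) := by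
            rw [mulVec_smul]; exact smul_le_smul_of_nonneg_left hu' (by simpa using hτ.le)
        _ = c := by rw [smul_smul, inv_mul_cancel₀ (neg_ne_zero.2 hτ.ne), one_smul]
    have := weak_duality hx hwy
    rw [dotProduct_smul, dotProduct_smul, smul_eq_mul, smul_eq_mul, inv_neg] at this
    exact nonpos_of_mul_nonneg_right (by rw [mul_add]; linarith) (inv_lt_zero.2 hτ)

theorem Module.Dual.exists_apply_prod_eq {R κ ι : Type*} [CommSemiring R] [Fintype κ] [Fintype ι]
    [DecidableEq κ] [DecidableEq ι] (f : Dual R ((κ → R) × (ι → R) × R)) :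
    ∃ (u : κ → R) (v : ι → R) (t : R), ∀ p q r, f (p, q, r) = u ⬝ᵥ p + v ⬝ᵥ q + t * r := by
  refine ⟨fun j => f (Pi.single j 1, 0, 0), fun i => f (0, Pi.single i 1, 0), f (0, 0, 1),
    fun p q r => ?_⟩
  have : (p, q, r) = ∑ j, p j • ((Pi.single j 1, 0, 0) : (κ → R) × (ι → R) × R) +
      ∑ i, q i • ((0, Pi.single i 1, 0) : (κ → R) × (ι → R) × R) + r • (0, 0, 1) := by
    ext <;> simp [Prod.fst_sum, Prod.snd_sum, Finset.sum_apply, Pi.single_apply]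
  rw [this]
  simp only [map_add, map_sum, map_smul, smul_eq_mul, dotProduct, mul_comm]

-- The optimality system `A x = b`, `Aᵀ w + y = c`, `⟪c, x⟫ - ⟪b, w⟫ = 0` as an equation in
-- `(Fin m → ℝ) × (Fin n → ℝ) × ℝ`: the columns of the unknowns `x, y ≥ 0`, then the free part.
variable (A c) in
def optimalityColumn : Fin n ⊕ Fin n → (Fin m → ℝ) × (Fin n → ℝ) × ℝ :=
  Sum.elim (fun i => (Aᵀ i, 0, c i)) (fun i => (0, Pi.single i 1, 0))

variable (A b) in
def optimalityFreeMap : (Fin m → ℝ) →ₗ[ℝ] (Fin m → ℝ) × (Fin n → ℝ) × ℝ where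
  toFun w := (0, Aᵀ *ᵥ w, -(b ⬝ᵥ w))
  map_add' w w' := by simp [mulVec_add, add_comm]
  map_smul' t w := by simp [mulVec_smul]

theorem feasible_of_sum_smul_optimalityColumn_add {z : Fin n ⊕ Fin n → ℝ} (hz : 0 ≤ z)
    {w : Fin m → ℝ}
    (h : ∑ k, z k • optimalityColumn A c k + optimalityFreeMap A b w = (b, c, 0)) :
    PrimalFeasible A b (fun i => z (.inl i)) ∧ DualFeasible A c w (fun i => z (.inr i)) ∧
      c ⬝ᵥ (fun i => z (.inl i)) = b ⬝ᵥ w := by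
  simp only [optimalityColumn, Fintype.sum_sum_type, Sum.elim_inl, Prod.smul_mk, smul_zero,
    smul_eq_mul, Sum.elim_inr, mul_zero, optimalityFreeMap, LinearMap.coe_mk, AddHom.coe_mk,
    Prod.ext_iff, Prod.fst_add, Prod.fst_sum, sum_const_zero, add_zero, Prod.snd_add,
    Prod.snd_sum, zero_add] at h
  obtain ⟨hx, hy, hobj⟩ := h
  refine ⟨⟨?_, fun i => hz _⟩, ⟨?_, fun i => hz _⟩, ?_⟩
  · simpa [mulVec_eq_sum] using hx
  · rw [← hy, add_comm, ← pi_eq_sum_univ']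
  · rw [dotProduct_comm]; simpa [dotProduct, add_neg_eq_zero] using hobj

theorem dual_apply_nonpos_of_feasible {x₀ : Fin n → ℝ} {w₀ : Fin m → ℝ} {y₀ : Fin n → ℝ}
    (hx₀ : PrimalFeasible A b x₀) (hwy₀ : DualFeasible A c w₀ y₀)
    {f : Dual ℝ ((Fin m → ℝ) × (Fin n → ℝ) × ℝ)} (hf : ∀ k, f (optimalityColumn A c k) ≤ 0)
    (hfQ : f ∘ₗ optimalityFreeMap A b = 0) : f (b, c, 0) ≤ 0 := by
  obtain ⟨u, v, τ, hf_eq⟩ := f.exists_apply_prod_eq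
  have hu : Aᵀ *ᵥ u + τ • c ≤ 0 := fun i => by
    have : f (Aᵀ i, 0, c i) ≤ 0 := hf (.inl i)
    rwa [hf_eq, dotProduct_zero, add_zero, dotProduct_comm] at this
  have hv : v ≤ 0 := fun i => by
    have : f (0, Pi.single i 1, 0) ≤ 0 := hf (.inr i)
    simpa [hf_eq] using this
  have hAv : A *ᵥ v = τ • b := by
    rw [← sub_eq_zero, ← dotProduct_eq_zero_iff]
    intro w
    have : f (0, Aᵀ *ᵥ w, -(b ⬝ᵥ w)) = 0 := LinearMap.congr_fun hfQ w
    rw [hf_eq, dotProduct_zero, dotProduct_comm v, transpose_mulVec_dotProduct] at this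
    rw [sub_dotProduct, smul_dotProduct, smul_eq_mul, dotProduct_comm (A *ᵥ v)]
    linarith
  rw [hf_eq, mul_zero, add_zero, dotProduct_comm u, dotProduct_comm v]
  exact dotProduct_add_dotProduct_nonpos hx₀ hwy₀ hu hv hAv

end LP

/-- Strong duality: if both the primal and the dual LP are feasible, then both have
optimal solutions and the optimal values coincide. -/
theorem strong_duality {m n : ℕ} (A : Matrix (Fin m) (Fin n) ℝ)
    (b : Fin m → ℝ) (c : Fin n → ℝ)
    (hP : ∃ x, PrimalFeasible A b x) (hD : ∃ w y, DualFeasible A c w y) :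
    ∃ x w y, PrimalFeasible A b x ∧ DualFeasible A c w y ∧
      (∀ x', PrimalFeasible A b x' → c ⬝ᵥ x ≤ c ⬝ᵥ x') ∧
      (∀ w' y', DualFeasible A c w' y' → b ⬝ᵥ w' ≤ b ⬝ᵥ w) ∧
      c ⬝ᵥ x = b ⬝ᵥ w := by
  obtain ⟨x₀, hx₀⟩ := hP
  obtain ⟨w₀, y₀, hwy₀⟩ := hD
  rcases exists_nonneg_sum_smul_add_eq_or_exists_dual univ (optimalityColumn A c)
      (optimalityFreeMap A b) (b, c, 0) with ⟨z, hz, w, hzw⟩ | ⟨f, hf, hfQ, hfb⟩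
  · obtain ⟨hx, hwy, hxw⟩ := feasible_of_sum_smul_optimalityColumn_add hz hzw
    exact ⟨_, w, _, hx, hwy, fun x' hx' => hxw ▸ weak_duality hx' hwy,
      fun w' y' hwy' => hxw ▸ weak_duality hx hwy', hxw⟩
  · exact absurd (dual_apply_nonpos_of_feasible hx₀ hwy₀ (fun k => hf k (mem_univ k)) hfQ)
      hfb.not_ge
end

section
/- Under Assumptions 1 and 2 with b = Ad and a = Bc, the problem max ⟨c, d + Mᵀv − x⟩ subject to −Bᵀw¹ + x = d + Mᵀv, x ≥ 0 (with variables x, w¹) has the same set of optimal x as the problem min ⟨c, x⟩ subject to Ax = b, Mx = Md + v, x ≥ 0. -/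
open Matrix

/-- Assumption 1: the row spaces of `A`, `B`, `M` are pairwise orthogonal
and their (direct) sum is all of `ℝⁿ`. -/
def Assumption1 {m l r n : ℕ} (A : Matrix (Fin m) (Fin n) ℝ)
    (B : Matrix (Fin l) (Fin n) ℝ) (M : Matrix (Fin r) (Fin n) ℝ) : Prop :=
  (∀ wa wb, (Aᵀ *ᵥ wa) ⬝ᵥ (Bᵀ *ᵥ wb) = 0) ∧
  (∀ wa wm, (Aᵀ *ᵥ wa) ⬝ᵥ (Mᵀ *ᵥ wm) = 0) ∧
  (∀ wb wm, (Bᵀ *ᵥ wb) ⬝ᵥ (Mᵀ *ᵥ wm) = 0) ∧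
  (LinearMap.range (Aᵀ).mulVecLin ⊔ LinearMap.range (Bᵀ).mulVecLin ⊔
      LinearMap.range (Mᵀ).mulVecLin = ⊤)

/-- Assumption 2: `M Mᵀ = I`. -/
def Assumption2 {r n : ℕ} (M : Matrix (Fin r) (Fin n) ℝ) : Prop :=
  M * Mᵀ = 1

lemma orth_mul_aux {p q n : ℕ} (A : Matrix (Fin p) (Fin n) ℝ) (M : Matrix (Fin q) (Fin n) ℝ)
    (h : ∀ wa wm, (Aᵀ *ᵥ wa) ⬝ᵥ (Mᵀ *ᵥ wm) = 0) : A * Mᵀ = 0 := by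
  ext i j
  have := h (Pi.single i 1) (Pi.single j 1)
  simpa [Matrix.mulVec_single, dotProduct, Matrix.mul_apply, mul_comm] using this

lemma mv0_aux {p q n : ℕ} (X : Matrix (Fin p) (Fin n) ℝ) (Y : Matrix (Fin q) (Fin n) ℝ)
    (h : X * Yᵀ = 0) (w : Fin q → ℝ) : X *ᵥ (Yᵀ *ᵥ w) = 0 := by
  rw [Matrix.mulVec_mulVec, h, Matrix.zero_mulVec]

lemma feas_key {m l r n : ℕ}
    (A : Matrix (Fin m) (Fin n) ℝ) (B : Matrix (Fin l) (Fin n) ℝ)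
    (M : Matrix (Fin r) (Fin n) ℝ) (d : Fin n → ℝ)
    (v : Fin r → ℝ)
    (hA1 : Assumption1 A B M) (hA2 : Assumption2 M) :
    ∀ x : Fin n → ℝ, (∃ w1 : Fin l → ℝ, -(Bᵀ *ᵥ w1) + x = d + Mᵀ *ᵥ v) ↔
      (A *ᵥ x = A *ᵥ d ∧ M *ᵥ x = M *ᵥ d + v) := by
  obtain ⟨hab, ham, hbm, hsup⟩ := hA1
  have hAB : A * Bᵀ = 0 := orth_mul_aux A B hab
  have hAM : A * Mᵀ = 0 := orth_mul_aux A M ham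
  have hBM : B * Mᵀ = 0 := orth_mul_aux B M hbm
  have hMB : M * Bᵀ = 0 := by
    have := congrArg Matrix.transpose hBM
    simpa using this
  have hMMv : M *ᵥ (Mᵀ *ᵥ v) = v := by
    rw [Matrix.mulVec_mulVec, hA2, Matrix.one_mulVec]
  intro x
  constructor
  · rintro ⟨w, hw⟩
    have hx : x = d + Mᵀ *ᵥ v + Bᵀ *ᵥ w := by
      rw [← hw]; abel
    constructor
    · rw [hx]
      simp [Matrix.mulVec_add, mv0_aux A M hAM, mv0_aux A B hAB]
    · rw [hx]
      simp [Matrix.mulVec_add, mv0_aux M B hMB, hMMv]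
  · rintro ⟨h1, h2⟩
    set y := x - (d + Mᵀ *ᵥ v) with hy
    have hAy : A *ᵥ y = 0 := by
      simp [hy, Matrix.mulVec_sub, Matrix.mulVec_add, mv0_aux A M hAM, h1]
    have hMy : M *ᵥ y = 0 := by
      simp [hy, Matrix.mulVec_sub, Matrix.mulVec_add, hMMv, h2]
    have hymem : y ∈ (LinearMap.range (Aᵀ).mulVecLin ⊔ LinearMap.range (Bᵀ).mulVecLin ⊔
        LinearMap.range (Mᵀ).mulVecLin) := by rw [hsup]; trivial
    rw [Submodule.mem_sup] at hymem
    obtain ⟨z1, hz1, z2, hz2, hzy⟩ := hymem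
    rw [Submodule.mem_sup] at hz1
    obtain ⟨za, hza, zb, hzb, hzz⟩ := hz1
    obtain ⟨u, hu⟩ := hza
    obtain ⟨w, hwv⟩ := hzb
    obtain ⟨t, ht⟩ := hz2
    simp only [Matrix.mulVecLin_apply] at hu hwv ht
    have hydec : y = Aᵀ *ᵥ u + Bᵀ *ᵥ w + Mᵀ *ᵥ t := by
      rw [hu, hwv, ht, hzz, hzy]
    set z : Fin n → ℝ := Aᵀ *ᵥ u + Mᵀ *ᵥ t with hz
    have hzsub : z = y - Bᵀ *ᵥ w := by rw [hydec, hz]; abel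
    have hzzero : z = 0 := by
      have h1' : y ⬝ᵥ z = 0 := by
        have e1 : y ⬝ᵥ (Aᵀ *ᵥ u) = (A *ᵥ y) ⬝ᵥ u := by
          rw [Matrix.dotProduct_mulVec, Matrix.vecMul_transpose]
        have e2 : y ⬝ᵥ (Mᵀ *ᵥ t) = (M *ᵥ y) ⬝ᵥ t := by
          rw [Matrix.dotProduct_mulVec, Matrix.vecMul_transpose]
        rw [hz, dotProduct_add, e1, e2, hAy, hMy]
        simp
      have h2' : (Bᵀ *ᵥ w) ⬝ᵥ z = 0 := by
        have e1 : (Bᵀ *ᵥ w) ⬝ᵥ (Aᵀ *ᵥ u) = 0 := by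
          have := hab u w
          rwa [dotProduct_comm] at this
        rw [hz, dotProduct_add, e1, hbm w t]
        simp
      have hdz : z ⬝ᵥ z = 0 := by
        rw [show z ⬝ᵥ z = y ⬝ᵥ z - (Bᵀ *ᵥ w) ⬝ᵥ z from by
          nth_rewrite 1 [hzsub]; rw [sub_dotProduct], h1', h2', sub_zero]
      exact dotProduct_self_eq_zero.mp hdz
    refine ⟨w, ?_⟩
    have hyw : y = Bᵀ *ᵥ w := by
      have := hzsub.symm.trans hzzero
      have h3 : y - Bᵀ *ᵥ w = 0 := this
      rw [sub_eq_zero] at h3; exact h3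
    rw [hy] at hyw
    have hx : x = d + Mᵀ *ᵥ v + Bᵀ *ᵥ w := by
      rw [← hyw]; abel
    rw [hx]; abel

/-- Under Assumptions 1–2 with `b = Ad`, `a = Bc`: the problem
`max ⟨c, d + Mᵀv - x⟩ s.t. -Bᵀw¹ + x = d + Mᵀv, x ≥ 0` has the same set of
optimal `x` as the problem `min ⟨c, x⟩ s.t. Ax = b, Mx = Md + v, x ≥ 0`. -/
theorem dual_and_cut_same_optimal_solutions {m l r n : ℕ}
    (A : Matrix (Fin m) (Fin n) ℝ) (B : Matrix (Fin l) (Fin n) ℝ)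
    (M : Matrix (Fin r) (Fin n) ℝ) (c d : Fin n → ℝ) (b : Fin m → ℝ)
    (a : Fin l → ℝ) (v : Fin r → ℝ) (hb : b = A *ᵥ d) (ha : a = B *ᵥ c)
    (hA1 : Assumption1 A B M) (hA2 : Assumption2 M) :
    {x : Fin n → ℝ |
        (∃ w1 : Fin l → ℝ, -(Bᵀ *ᵥ w1) + x = d + Mᵀ *ᵥ v) ∧ 0 ≤ x ∧
          ∀ x' : Fin n → ℝ, (∃ w1 : Fin l → ℝ, -(Bᵀ *ᵥ w1) + x' = d + Mᵀ *ᵥ v) → 0 ≤ x' →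
            c ⬝ᵥ (d + Mᵀ *ᵥ v - x') ≤ c ⬝ᵥ (d + Mᵀ *ᵥ v - x)} =
      {x : Fin n → ℝ |
        (A *ᵥ x = b ∧ M *ᵥ x = M *ᵥ d + v ∧ 0 ≤ x) ∧
          ∀ x' : Fin n → ℝ, A *ᵥ x' = b → M *ᵥ x' = M *ᵥ d + v → 0 ≤ x' →
            c ⬝ᵥ x ≤ c ⬝ᵥ x'} := by
  ext x
  simp only [Set.mem_setOf_eq, hb]
  have key := feas_key A B M d v hA1 hA2
  have obj : ∀ x x' : Fin n → ℝ,
      (c ⬝ᵥ (d + Mᵀ *ᵥ v - x') ≤ c ⬝ᵥ (d + Mᵀ *ᵥ v - x) ↔ c ⬝ᵥ x ≤ c ⬝ᵥ x') := by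
    intro x x'
    rw [dotProduct_sub, dotProduct_sub]
    constructor <;> intro h <;> linarith
  constructor
  · rintro ⟨hfeas, hx, hopt⟩
    obtain ⟨hAx, hMx⟩ := (key x).mp hfeas
    refine ⟨⟨hAx, hMx, hx⟩, ?_⟩
    intro x' hA' hM' hx'
    exact (obj x x').mp (hopt x' ((key x').mpr ⟨hA', hM'⟩) hx')
  · rintro ⟨⟨hAx, hMx, hx⟩, hopt⟩
    refine ⟨(key x).mpr ⟨hAx, hMx⟩, hx, ?_⟩
    intro x' hfeas' hx'
    obtain ⟨hA', hM'⟩ := (key x').mp hfeas'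
    exact (obj x x').mpr (hopt x' hA' hM' hx')
end

section
/- Suppose d ≥ 0 and c ≥ 0 (componentwise), and Assumptions 1–2 hold with b = Ad. Then v ∈ Θ_P if and only if there exists w¹ ∈ ℝ^l such that the slack vector x = d + Mᵀv + Bᵀw¹ satisfies x ≥ 0 (and hence is feasible for the cut problem min ⟨c,x⟩ s.t. Ax = b, Mx = Md + v, x ≥ 0). -/
open Matrix

/-- Transpose/dot compatibility: `(Pᵀ wp) ⬝ u = wp ⬝ (P u)`. -/
lemma transpose_mulVec_dot {p n : ℕ} (P : Matrix (Fin p) (Fin n) ℝ)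
    (wp : Fin p → ℝ) (u : Fin n → ℝ) :
    (Pᵀ *ᵥ wp) ⬝ᵥ u = wp ⬝ᵥ (P *ᵥ u) := by
  rw [mulVec_transpose, dotProduct_mulVec]

/-- If `u` is orthogonal to every `Pᵀ wp`, then `P u = 0`. -/
lemma orth_mulVec_eq_zero {p n : ℕ} {P : Matrix (Fin p) (Fin n) ℝ}
    {u : Fin n → ℝ} (h : ∀ wp, (Pᵀ *ᵥ wp) ⬝ᵥ u = 0) : P *ᵥ u = 0 := by
  have h2 := h (P *ᵥ u)
  rw [transpose_mulVec_dot] at h2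
  exact dotProduct_self_eq_zero.mp h2

/-- With `d, c ≥ 0` and Assumptions 1–2, `v ∈ Θ_P` iff there is `w¹` such that
the slack vector `d + Mᵀv + Bᵀw¹` is nonnegative. -/
theorem mem_ThetaP_iff_slack {m l r n : ℕ}
    (A : Matrix (Fin m) (Fin n) ℝ) (B : Matrix (Fin l) (Fin n) ℝ)
    (M : Matrix (Fin r) (Fin n) ℝ) (c d : Fin n → ℝ) (b : Fin m → ℝ)
    (hb : b = A *ᵥ d) (hd : 0 ≤ d) (hc : 0 ≤ c)
    (hA1 : Assumption1 A B M) (hA2 : Assumption2 M) (v : Fin r → ℝ) :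
    (∃ x : Fin n → ℝ, 0 ≤ x ∧ A *ᵥ x = b ∧ M *ᵥ x = M *ᵥ d + v) ↔
      ∃ w1 : Fin l → ℝ, 0 ≤ d + Mᵀ *ᵥ v + Bᵀ *ᵥ w1 := by
  obtain ⟨hAB, hAM, hBM, hspan⟩ := hA1
  have hABv : ∀ wb, A *ᵥ (Bᵀ *ᵥ wb) = 0 := fun wb =>
    orth_mulVec_eq_zero (fun wa => hAB wa wb)
  have hAMv : ∀ wm, A *ᵥ (Mᵀ *ᵥ wm) = 0 := fun wm =>
    orth_mulVec_eq_zero (fun wa => hAM wa wm)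
  have hMBv : ∀ wb, M *ᵥ (Bᵀ *ᵥ wb) = 0 := fun wb =>
    orth_mulVec_eq_zero (fun wm => by rw [dotProduct_comm]; exact hBM wb wm)
  have hMMv : ∀ w, M *ᵥ (Mᵀ *ᵥ w) = w := fun w => by
    rw [mulVec_mulVec, hA2, one_mulVec]
  constructor
  · rintro ⟨x, hx, hAx, hMx⟩
    have hmem : x - d ∈ (⊤ : Submodule ℝ (Fin n → ℝ)) := trivial
    rw [← hspan] at hmem
    rcases Submodule.mem_sup.mp hmem with ⟨y, hy, zm, hzm, hyz⟩
    rcases Submodule.mem_sup.mp hy with ⟨ya, hya, yb, hyb, rfl⟩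
    obtain ⟨wa, rfl⟩ := hya
    obtain ⟨wb, rfl⟩ := hyb
    obtain ⟨wm, rfl⟩ := hzm
    simp only [mulVecLin_apply] at hyz
    -- A (x - d) = 0
    have hA0 : A *ᵥ (x - d) = 0 := by
      rw [mulVec_sub, hAx, hb, sub_self]
    have hAeq : A *ᵥ (Aᵀ *ᵥ wa) = 0 := by
      have := hA0
      rw [← hyz, mulVec_add, mulVec_add, hABv, hAMv, add_zero, add_zero] at this
      exact this
    have hwa : Aᵀ *ᵥ wa = 0 := by
      have h2 : (Aᵀ *ᵥ wa) ⬝ᵥ (Aᵀ *ᵥ wa) = 0 := by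
        rw [transpose_mulVec_dot, hAeq, dotProduct_zero]
      exact dotProduct_self_eq_zero.mp h2
    -- M (x - d) = v
    have hM0 : M *ᵥ (x - d) = v := by
      rw [mulVec_sub, hMx, add_sub_cancel_left]
    have hwm : wm = v := by
      rw [← hyz, mulVec_add, mulVec_add, hwa, mulVec_zero, hMBv, hMMv,
        zero_add, zero_add] at hM0
      exact hM0
    refine ⟨wb, ?_⟩
    have hxeq : d + Mᵀ *ᵥ v + Bᵀ *ᵥ wb = x := by
      have : x - d = Bᵀ *ᵥ wb + Mᵀ *ᵥ v := by
        rw [← hyz, hwa, hwm, zero_add]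
      rw [sub_eq_iff_eq_add] at this
      rw [this]; abel
    rw [hxeq]; exact hx
  · rintro ⟨w1, hw1⟩
    refine ⟨d + Mᵀ *ᵥ v + Bᵀ *ᵥ w1, hw1, ?_, ?_⟩
    · rw [mulVec_add, mulVec_add, hAMv, hABv, add_zero, add_zero, hb]
    · rw [mulVec_add, mulVec_add, hMMv, hMBv, add_zero]
end

section
/- Suppose d ≥ 0, c ≥ 0 and Assumptions 1–2 hold. For every u ∈ Θ_D, the perturbed problem min ⟨c + Mᵀu, x⟩ s.t. Ax = b, x ≥ 0 has an optimal solution, and for every optimal solution x*(u), the vector v = M(x*(u) − d) belongs to Θ_P. That is, the set-valued mapping Φ(u) = {M(x*(u) − d) : x*(u) optimal} is nonempty and Φ(u) ⊆ Θ_P. -/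
/-!
Write `y - c = Aᵀα + Bᵀβ + Mᵀγ` using Assumption 1, where `y ≥ 0` is a witness for `u ∈ Θ_D`.
Since `B(y - c) = 0` and the row spaces are orthogonal, `Bᵀβ = 0`, and `M Mᵀ = I` forces `γ = u`.
Hence `c + Mᵀu = y - Aᵀα`, so `-α` is feasible for the dual of the perturbed LP and, by weak
duality, the perturbed objective is bounded below on the feasible set. A linear program whose objective
is bounded below attains its infimum: the pairs `(Ax, ⟨cost, x⟩)` with `x ≥ 0` form a finitely
generated cone, which is closed by the conic Carathéodory theorem. Finally, every optimal `x`
is feasible, which is all that `M(x - d) ∈ Θ_P` asks for.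
-/

open Matrix

/-- Optimality for the LP `min ⟨cost, x⟩ s.t. Ax = Ad, x ≥ 0`. -/
def OptimalFor {m n : ℕ} (A : Matrix (Fin m) (Fin n) ℝ) (d cost x : Fin n → ℝ) : Prop :=
  A *ᵥ x = A *ᵥ d ∧ 0 ≤ x ∧
    ∀ x' : Fin n → ℝ, A *ᵥ x' = A *ᵥ d → 0 ≤ x' → cost ⬝ᵥ x ≤ cost ⬝ᵥ x'

/-- The primal projection polyhedron `Θ_P`. -/
def ThetaP {m r n : ℕ} (A : Matrix (Fin m) (Fin n) ℝ)
    (M : Matrix (Fin r) (Fin n) ℝ) (d : Fin n → ℝ) : Set (Fin r → ℝ) :=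
  {v | ∃ x : Fin n → ℝ, 0 ≤ x ∧ A *ᵥ x = A *ᵥ d ∧ M *ᵥ x = M *ᵥ d + v}

/-- The dual projection polyhedron `Θ_D`. -/
def ThetaD {l r n : ℕ} (B : Matrix (Fin l) (Fin n) ℝ)
    (M : Matrix (Fin r) (Fin n) ℝ) (c : Fin n → ℝ) : Set (Fin r → ℝ) :=
  {u | ∃ y : Fin n → ℝ, 0 ≤ y ∧ B *ᵥ y = B *ᵥ c ∧ M *ᵥ y = M *ᵥ c + u}

/-- The set-valued mapping `Φ(u) = {M(x* - d) : x* optimal for the OFD-perturbed primal}`. -/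
def Phi {m r n : ℕ} (A : Matrix (Fin m) (Fin n) ℝ) (M : Matrix (Fin r) (Fin n) ℝ)
    (c d : Fin n → ℝ) (u : Fin r → ℝ) : Set (Fin r → ℝ) :=
  {v | ∃ x : Fin n → ℝ, OptimalFor A d (c + Mᵀ *ᵥ u) x ∧ v = M *ᵥ (x - d)}

/-- The set-valued mapping `Ψ(v) = {M(y* - c) : y* optimal for the OFD-perturbed dual}`. -/
def Psi {l r n : ℕ} (B : Matrix (Fin l) (Fin n) ℝ) (M : Matrix (Fin r) (Fin n) ℝ)
    (c d : Fin n → ℝ) (v : Fin r → ℝ) : Set (Fin r → ℝ) :=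
  {u | ∃ y : Fin n → ℝ, OptimalFor B c (d + Mᵀ *ᵥ v) y ∧ u = M *ᵥ (y - c)}

open Finset Function

section ConicalCaratheodory

variable {E ι : Type*} [AddCommGroup E] [Module ℝ E] [Fintype ι] {g : ι → E}

theorem exists_nonneg_sum_smul_eq_support_ssubset_of_sum_smul_eq_zero {c e : ι → ℝ}
    (hc : 0 ≤ c) (he : ∑ i, e i • g i = 0) (hec : support e ⊆ support c) {j : ι}
    (hj : 0 < e j) :
    ∃ c' : ι → ℝ, 0 ≤ c' ∧ ∑ i, c' i • g i = ∑ i, c i • g i ∧ support c' ⊂ support c := by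
  obtain ⟨i₀, hi₀, hmin⟩ := (univ.filter (0 < e ·)).exists_min_image (fun i => c i / e i)
    ⟨j, by simpa using hj⟩
  simp only [mem_filter, mem_univ, true_and] at hi₀ hmin
  -- the largest step along `-e` that keeps `c` nonnegative; it zeroes the coordinate `i₀`
  set t := c i₀ / e i₀
  refine ⟨c - t • e, fun i => ?_, ?_, Set.ssubset_iff_exists.2 ⟨fun i hi => ?_, i₀, ?_, ?_⟩⟩
  · simp only [Pi.zero_apply, Pi.sub_apply, Pi.smul_apply, smul_eq_mul, sub_nonneg]
    rcases lt_or_ge 0 (e i) with hei | hei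
    · exact (le_div_iff₀ hei).1 (hmin i hei)
    · exact (mul_nonpos_of_nonneg_of_nonpos (div_nonneg (hc i₀) hi₀.le) hei).trans (hc i)
  · simp only [Pi.sub_apply, Pi.smul_apply, sub_smul, sum_sub_distrib, smul_eq_mul, mul_smul,
      ← smul_sum, he, smul_zero, sub_zero]
  · by_contra hci
    have hei : e i = 0 := notMem_support.1 fun h => hci (hec h)
    simp [hei, notMem_support.1 hci] at hi
  · exact hec hi₀.ne'
  · simp [t, hi₀.ne']

theorem exists_nonneg_sum_smul_eq_support_ssubset_of_not_linearIndepOn {c : ι → ℝ}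
    (hc : 0 ≤ c) (hli : ¬LinearIndepOn ℝ g (support c)) :
    ∃ c' : ι → ℝ, 0 ≤ c' ∧ ∑ i, c' i • g i = ∑ i, c i • g i ∧ support c' ⊂ support c := by
  obtain ⟨l, hl, hlg, hl0⟩ : ∃ l ∈ Finsupp.supported ℝ ℝ (support c),
      Finsupp.linearCombination ℝ g l = 0 ∧ l ≠ 0 := by
    simpa [linearIndepOn_iff] using hli
  have hsum : ∑ i, l i • g i = 0 := by
    rwa [Finsupp.linearCombination_apply, Finsupp.sum_fintype _ _ (by simp)] at hlg
  have hsupp : support l ⊆ support c := by rwa [Finsupp.fun_support_eq]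
  obtain ⟨j, hj⟩ := Finsupp.ne_iff.1 hl0
  rcases hj.lt_or_gt with hj | hj
  · exact exists_nonneg_sum_smul_eq_support_ssubset_of_sum_smul_eq_zero (e := -l) hc
      (by simp [hsum]) (by simpa using hsupp) (j := j) (by simpa using hj)
  · exact exists_nonneg_sum_smul_eq_support_ssubset_of_sum_smul_eq_zero hc hsum hsupp hj

variable (g) in
theorem exists_nonneg_sum_smul_eq_linearIndepOn_support (c : ι → ℝ) (hc : 0 ≤ c) :
    ∃ c' : ι → ℝ, 0 ≤ c' ∧ ∑ i, c' i • g i = ∑ i, c i • g i ∧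
      LinearIndepOn ℝ g (support c') := by
  by_cases hli : LinearIndepOn ℝ g (support c)
  · exact ⟨c, hc, rfl, hli⟩
  obtain ⟨c₁, hc₁, hsum₁, hlt⟩ :=
    exists_nonneg_sum_smul_eq_support_ssubset_of_not_linearIndepOn hc hli
  obtain ⟨c', hc', hsum', hli'⟩ := exists_nonneg_sum_smul_eq_linearIndepOn_support c₁ hc₁
  exact ⟨c', hc', hsum'.trans hsum₁, hli'⟩
termination_by (support c).ncard
decreasing_by exact Set.ncard_lt_ncard hlt

theorem PointedCone.mem_hull_range_iff {x : E} :
    x ∈ PointedCone.hull ℝ (Set.range g) ↔ ∃ c : ι → ℝ, 0 ≤ c ∧ ∑ i, c i • g i = x := by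
  rw [Submodule.mem_span_range_iff_exists_fun]
  constructor
  · rintro ⟨c, rfl⟩
    exact ⟨fun i => c i, fun i => (c i).2, rfl⟩
  · rintro ⟨c, hc, rfl⟩
    exact ⟨fun i => ⟨c i, hc i⟩, rfl⟩

variable [TopologicalSpace E] [IsTopologicalAddGroup E] [ContinuousSMul ℝ E] [T2Space E]

theorem isClosed_image_nonneg_of_linearIndependent (hg : LinearIndependent ℝ g) :
    IsClosed ((fun c : ι → ℝ => ∑ i, c i • g i) '' {c | 0 ≤ c}) :=
  (LinearMap.isClosedEmbedding_of_injective (f := Fintype.linearCombination ℝ g)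
    (LinearMap.ker_eq_bot.2 hg.fintypeLinearCombination_injective)).isClosedMap _ isClosed_Ici

variable (g) in
theorem PointedCone.isClosed_hull_range :
    IsClosed (PointedCone.hull ℝ (Set.range g) : Set E) := by
  classical
  have hunion : (PointedCone.hull ℝ (Set.range g) : Set E) =
      ⋃ (s : Set ι) (_ : LinearIndepOn ℝ g s),
        (fun c : s → ℝ => ∑ i, c i • g i) '' {c | 0 ≤ c} := by
    ext x
    simp only [SetLike.mem_coe, mem_hull_range_iff, Set.mem_iUnion, Set.mem_image]
    constructor
    · rintro ⟨c, hc, rfl⟩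
      obtain ⟨c', hc', hsum, hli⟩ := exists_nonneg_sum_smul_eq_linearIndepOn_support g c hc
      refine ⟨support c', hli, fun i => c' i, fun i => hc' i, ?_⟩
      rw [← hsum]
      exact (sum_congr_set _ _ _ (fun _ _ => rfl) fun i hi => by simp [notMem_support.1 hi]).symm
    · rintro ⟨s, -, c, hc : 0 ≤ c, rfl⟩
      refine ⟨fun i => if h : i ∈ s then c ⟨i, h⟩ else 0, fun i => ?_,
        sum_congr_set _ _ _ (fun i hi => by simp [hi]) fun i hi => by simp [hi]⟩
      by_cases h : i ∈ s
      · simpa [h] using hc ⟨i, h⟩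
      · simp [h]
  rw [hunion]
  exact isClosed_iUnion_of_finite fun s => isClosed_iUnion_of_finite fun hli =>
    isClosed_image_nonneg_of_linearIndependent hli

end ConicalCaratheodory

theorem exists_optimalFor_of_bddBelow {m n : ℕ} (A : Matrix (Fin m) (Fin n) ℝ) {d : Fin n → ℝ}
    (cost : Fin n → ℝ) (hd : 0 ≤ d)
    (hbdd : BddBelow ((cost ⬝ᵥ ·) '' {x | 0 ≤ x ∧ A *ᵥ x = A *ᵥ d})) :
    ∃ x, OptimalFor A d cost x := by
  set F := {x : Fin n → ℝ | 0 ≤ x ∧ A *ᵥ x = A *ᵥ d}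
  have hcols : ∀ x : Fin n → ℝ, ∑ i, x i • (Aᵀ i, cost i) = (A *ᵥ x, cost ⬝ᵥ x) := by
    intro x
    ext <;> simp [Prod.fst_sum, Prod.snd_sum, mulVec, dotProduct, mul_comm]
  have hF : (cost ⬝ᵥ ·) '' F =
      (fun t => (A *ᵥ d, t)) ⁻¹' PointedCone.hull ℝ (Set.range fun i => (Aᵀ i, cost i)) := by
    ext t
    simp only [Set.mem_preimage, SetLike.mem_coe, PointedCone.mem_hull_range_iff, hcols,
      Prod.mk.injEq]
    simp [F, and_assoc, eq_comm]
  have hclosed : IsClosed ((cost ⬝ᵥ ·) '' F) :=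
    hF ▸ (PointedCone.isClosed_hull_range _).preimage (by fun_prop)
  obtain ⟨x, ⟨hx0, hxA⟩, hx⟩ := hclosed.csInf_mem ⟨_, d, ⟨hd, rfl⟩, rfl⟩ hbdd
  exact ⟨x, hxA, hx0, fun x' hA' h0' => hx.le.trans (csInf_le hbdd ⟨x', ⟨h0', hA'⟩, rfl⟩)⟩

theorem bddBelow_dotProduct_of_transpose_mulVec_le {m n : ℕ} (A : Matrix (Fin m) (Fin n) ℝ)
    (d : Fin n → ℝ) {cost : Fin n → ℝ} {α : Fin m → ℝ} (hα : Aᵀ *ᵥ α ≤ cost) :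
    BddBelow ((cost ⬝ᵥ ·) '' {x | 0 ≤ x ∧ A *ᵥ x = A *ᵥ d}) := by
  refine ⟨α ⬝ᵥ (A *ᵥ d), ?_⟩
  rintro _ ⟨x, ⟨hx0, hxA⟩, rfl⟩
  calc α ⬝ᵥ (A *ᵥ d)
      = (Aᵀ *ᵥ α) ⬝ᵥ x := by rw [dotProduct_comm (Aᵀ *ᵥ α), dotProduct_transpose_mulVec, hxA]
    _ ≤ cost ⬝ᵥ x := dotProduct_le_dotProduct_of_nonneg_right hα hx0

theorem Assumption1.exists_eq_transpose_mulVec_add {m l r n : ℕ}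
    {A : Matrix (Fin m) (Fin n) ℝ} {B : Matrix (Fin l) (Fin n) ℝ} {M : Matrix (Fin r) (Fin n) ℝ}
    (hA1 : Assumption1 A B M) (hA2 : Assumption2 M) {w : Fin n → ℝ} (hw : B *ᵥ w = 0) :
    ∃ α, w = Aᵀ *ᵥ α + Mᵀ *ᵥ (M *ᵥ w) := by
  obtain ⟨hAB, hAM, hBM, htop⟩ := hA1
  obtain ⟨_, hab, _, ⟨γ, rfl⟩, hsum⟩ :=
    Submodule.mem_sup.1 (htop.symm ▸ Submodule.mem_top : w ∈ _)
  obtain ⟨_, ⟨α, rfl⟩, _, ⟨β, rfl⟩, rfl⟩ := Submodule.mem_sup.1 hab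
  simp only [mulVecLin_apply] at hsum
  have hβ : Bᵀ *ᵥ β = 0 := by
    refine dotProduct_self_eq_zero.1 ?_
    have hβw : (Bᵀ *ᵥ β) ⬝ᵥ w = 0 := by
      rw [dotProduct_comm, dotProduct_transpose_mulVec, hw, dotProduct_zero]
    rwa [← hsum, dotProduct_add, dotProduct_add, dotProduct_comm, hAB, hBM, zero_add,
      add_zero] at hβw
  have hMA : M *ᵥ (Aᵀ *ᵥ α) = 0 := by
    refine dotProduct_eq_zero_iff.1 fun z => ?_
    rw [dotProduct_comm, ← dotProduct_transpose_mulVec, hAM]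
  have hMw : M *ᵥ w = γ := by
    rw [← hsum, hβ, add_zero, mulVec_add, hMA, mulVec_mulVec, hA2, one_mulVec, zero_add]
  exact ⟨α, by rw [hMw, ← hsum, hβ, add_zero]⟩

theorem Phi_nonempty_subset_ThetaP_general {m l r n : ℕ}
    (A : Matrix (Fin m) (Fin n) ℝ) (B : Matrix (Fin l) (Fin n) ℝ)
    (M : Matrix (Fin r) (Fin n) ℝ) (c d : Fin n → ℝ)
    (hd : 0 ≤ d)
    (hA1 : Assumption1 A B M) (hA2 : Assumption2 M)
    (u : Fin r → ℝ) (hu : u ∈ ThetaD B M c) :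
    (∃ x : Fin n → ℝ, OptimalFor A d (c + Mᵀ *ᵥ u) x) ∧
      (Phi A M c d u).Nonempty ∧ Phi A M c d u ⊆ ThetaP A M d := by
  obtain ⟨y, hy0, hBy, hMy⟩ := hu
  obtain ⟨α, hα⟩ := hA1.exists_eq_transpose_mulVec_add hA2 (w := y - c)
    (by rw [mulVec_sub, hBy, sub_self])
  rw [mulVec_sub, hMy, add_sub_cancel_left] at hα
  have hreduced : c + Mᵀ *ᵥ u - Aᵀ *ᵥ (-α) = y := by
    rw [mulVec_neg]
    linear_combination -hα
  have hdual : Aᵀ *ᵥ (-α) ≤ c + Mᵀ *ᵥ u := sub_nonneg.1 (hreduced ▸ hy0)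
  obtain ⟨x, hx⟩ := exists_optimalFor_of_bddBelow A (c + Mᵀ *ᵥ u) hd
    (bddBelow_dotProduct_of_transpose_mulVec_le A d hdual)
  refine ⟨⟨x, hx⟩, ⟨_, x, hx, rfl⟩, ?_⟩
  rintro _ ⟨x', ⟨hxA, hx0, -⟩, rfl⟩
  exact ⟨x', hx0, hxA, by rw [mulVec_sub, add_sub_cancel]⟩

/-- For every `u ∈ Θ_D`, the perturbed primal has an optimal solution and
`Φ(u)` is a nonempty subset of `Θ_P`. -/
theorem Phi_nonempty_subset_ThetaP {m l r n : ℕ}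
    (A : Matrix (Fin m) (Fin n) ℝ) (B : Matrix (Fin l) (Fin n) ℝ)
    (M : Matrix (Fin r) (Fin n) ℝ) (c d : Fin n → ℝ)
    (hd : 0 ≤ d) (hc : 0 ≤ c)
    (hA1 : Assumption1 A B M) (hA2 : Assumption2 M)
    (u : Fin r → ℝ) (hu : u ∈ ThetaD B M c) :
    (∃ x : Fin n → ℝ, OptimalFor A d (c + Mᵀ *ᵥ u) x) ∧
      (Phi A M c d u).Nonempty ∧ Phi A M c d u ⊆ ThetaP A M d :=
  Phi_nonempty_subset_ThetaP_general A B M c d hd hA1 hA2 u hu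
end

section
/- Suppose d ≥ 0, c ≥ 0 and Assumptions 1–2 hold. Given u ∈ Θ_D and v ∈ Θ_P, there exists a pair (x̄, ȳ) with A x̄ = Ad, M x̄ = Md + v, x̄ ≥ 0, B ȳ = Bc, M ȳ = Mc + u, ȳ ≥ 0, and ⟨x̄, ȳ⟩ = 0 if and only if both v ∈ Φ(u) and u ∈ Ψ(v). Moreover, any such (x̄, ȳ) is a pair of optimal solutions of the problems min ⟨c,x⟩ s.t. Ax = Ad, Mx = Md + v, x ≥ 0 and min ⟨d,y⟩ s.t. By = Bc, My = Mc + u, y ≥ 0. -/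
open Matrix

section FarkasAux
open Finset
lemma farkas_fin {n : ℕ} : ∀ (k : ℕ) (g : Fin k → (Fin n → ℝ)) (q : Fin n → ℝ),
    (∀ z, (∀ j, 0 ≤ g j ⬝ᵥ z) → 0 ≤ q ⬝ᵥ z) →
    ∃ μ : Fin k → ℝ, (∀ j, 0 ≤ μ j) ∧ q = ∑ j, μ j • g j := by
  intro k
  induction k with
  | zero =>
    intro g q h
    refine ⟨0, fun j => le_rfl, ?_⟩
    have h0 : 0 ≤ q ⬝ᵥ (-q) := h (-q) (fun j => j.elim0)
    rw [dotProduct_neg] at h0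
    have hs : 0 ≤ q ⬝ᵥ q := Finset.sum_nonneg fun i _ => mul_self_nonneg _
    have : q ⬝ᵥ q = 0 := le_antisymm (by linarith) hs
    rw [dotProduct_self_eq_zero.mp this]
    simp
  | succ k ih =>
    intro g q h
    by_cases hc : ∀ z, (∀ j : Fin k, 0 ≤ g j.castSucc ⬝ᵥ z) → 0 ≤ q ⬝ᵥ z
    · obtain ⟨μ, hμ, hq⟩ := ih (fun j => g j.castSucc) q hc
      refine ⟨Fin.snoc μ 0, ?_, ?_⟩
      · intro j
        refine Fin.lastCases ?_ (fun i => ?_) j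
        · simp
        · simpa using hμ i
      · rw [Fin.sum_univ_castSucc]
        simpa using hq
    · push_neg at hc
      obtain ⟨z0, hz0, hqz0⟩ := hc
      have hβ : g (Fin.last k) ⬝ᵥ z0 < 0 := by
        by_contra hb
        push_neg at hb
        have := h z0 (fun j => Fin.lastCases hb (fun i => hz0 i) j)
        linarith
      set β := g (Fin.last k) ⬝ᵥ z0 with hβdef
      have hβ0 : β ≠ 0 := ne_of_lt hβ
      set gl := g (Fin.last k) with hgl
      have key : ∀ w z : Fin n → ℝ,
          (w - ((w ⬝ᵥ z0) / β) • gl) ⬝ᵥ z = w ⬝ᵥ (z - ((gl ⬝ᵥ z) / β) • z0) := by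
        intro w z
        simp only [sub_dotProduct, dotProduct_sub, smul_dotProduct, dotProduct_smul,
          smul_eq_mul]
        ring
      have hprem : ∀ z, (∀ j : Fin k,
          0 ≤ (g j.castSucc - ((g j.castSucc ⬝ᵥ z0) / β) • gl) ⬝ᵥ z) →
          0 ≤ (q - ((q ⬝ᵥ z0) / β) • gl) ⬝ᵥ z := by
        intro z hz
        rw [key q z]
        apply h
        intro j
        refine Fin.lastCases ?_ (fun i => ?_) j
        · rw [← hgl, dotProduct_sub, dotProduct_smul, smul_eq_mul, ← hβdef,
            div_mul_cancel₀ _ hβ0, sub_self]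
        · rw [← key (g i.castSucc) z]
          exact hz i
      obtain ⟨μ, hμ, hq'⟩ := ih _ _ hprem
      set lam := (q ⬝ᵥ z0 - ∑ j, μ j * (g j.castSucc ⬝ᵥ z0)) / β with hlam
      have hlam0 : 0 ≤ lam := by
        rw [hlam, div_nonneg_iff]
        right
        have hsum : 0 ≤ ∑ j, μ j * (g j.castSucc ⬝ᵥ z0) :=
          Finset.sum_nonneg fun j _ => mul_nonneg (hμ j) (hz0 j)
        constructor <;> linarith
      refine ⟨Fin.snoc μ lam, ?_, ?_⟩
      · intro j
        refine Fin.lastCases ?_ (fun i => ?_) j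
        · simpa using hlam0
        · simpa using hμ i
      · rw [Fin.sum_univ_castSucc]
        simp only [Fin.snoc_castSucc, Fin.snoc_last]
        have expand : q - ((q ⬝ᵥ z0) / β) • gl
            = ∑ j, μ j • g j.castSucc - (∑ j, μ j * ((g j.castSucc ⬝ᵥ z0) / β)) • gl := by
          rw [hq', Finset.sum_smul]
          simp only [smul_sub, Finset.sum_sub_distrib, smul_smul]
        have hmain : q = ∑ j, μ j • g j.castSucc
            + ((q ⬝ᵥ z0) / β - ∑ j, μ j * ((g j.castSucc ⬝ᵥ z0) / β)) • gl := by
          have h2 := sub_eq_iff_eq_add.mp expand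
          conv_lhs => rw [h2]
          rw [sub_smul]
          abel
        conv_lhs => rw [hmain]
        congr 1
        have hsc : ∑ j, μ j * ((g j.castSucc ⬝ᵥ z0) / β)
            = ∑ j, μ j * (g j.castSucc ⬝ᵥ z0) / β :=
          Finset.sum_congr rfl fun j _ => by ring
        rw [hlam, sub_div, Finset.sum_div, hsc]

lemma farkas_fintype {n : ℕ} {ι : Type} [Fintype ι] (g : ι → (Fin n → ℝ)) (q : Fin n → ℝ)
    (h : ∀ z, (∀ j, 0 ≤ g j ⬝ᵥ z) → 0 ≤ q ⬝ᵥ z) :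
    ∃ μ : ι → ℝ, (∀ j, 0 ≤ μ j) ∧ q = ∑ j, μ j • g j := by
  classical
  let e := Fintype.equivFin ι
  obtain ⟨μ, hμ, hq⟩ := farkas_fin (Fintype.card ι) (fun i => g (e.symm i)) q
    (fun z hz => h z (fun j => by simpa using hz (e j)))
  refine ⟨fun j => μ (e j), fun j => hμ _, ?_⟩
  rw [hq]
  exact (Fintype.sum_equiv e _ _ (fun j => by simp)).symm

lemma exists_pos_step {n : ℕ} (x z : Fin n → ℝ) (hx : 0 ≤ x)
    (hz : ∀ i, x i = 0 → 0 ≤ z i) : ∃ t : ℝ, 0 < t ∧ 0 ≤ x + t • z := by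
  classical
  set s : Finset ℝ :=
    insert 1 (Finset.univ.image fun i => if z i < 0 then x i / (-(z i)) else 1) with hs
  have hne : s.Nonempty := ⟨1, Finset.mem_insert_self _ _⟩
  set t := s.min' hne with ht
  have hpos : ∀ y ∈ s, 0 < y := by
    intro y hy
    rw [hs, Finset.mem_insert] at hy
    rcases hy with rfl | hy
    · norm_num
    · obtain ⟨i, -, rfl⟩ := Finset.mem_image.mp hy
      by_cases hzi : z i < 0
      · have hxi : 0 < x i := by
          rcases lt_or_eq_of_le (hx i) with h' | h'
          · exact h'
          · exact absurd (hz i h'.symm) (not_le.mpr hzi)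
        simp only [hzi, if_true]
        exact div_pos hxi (by linarith)
      · simp [hzi]
  refine ⟨t, hpos t (s.min'_mem hne), ?_⟩
  intro i
  simp only [Pi.add_apply, Pi.smul_apply, smul_eq_mul, Pi.zero_apply]
  by_cases hzi : z i < 0
  · have hmem : x i / (-(z i)) ∈ s := by
      rw [hs]
      exact Finset.mem_insert_of_mem (Finset.mem_image.mpr ⟨i, Finset.mem_univ i, by simp [hzi]⟩)
    have := s.min'_le _ hmem
    rw [← ht] at this
    have h2 : t * (-(z i)) ≤ x i := by
      rw [← le_div_iff₀ (by linarith : (0:ℝ) < -(z i))]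
      exact this
    nlinarith
  · push_neg at hzi
    have htpos := hpos t (s.min'_mem hne)
    have hxi' : (0:ℝ) ≤ x i := hx i
    have hmul : 0 ≤ t * z i := mul_nonneg htpos.le hzi
    linarith

lemma exists_multipliers {m n : ℕ} (A : Matrix (Fin m) (Fin n) ℝ) (d q x : Fin n → ℝ)
    (hopt : OptimalFor A d q x) :
    ∃ p : Fin m → ℝ, 0 ≤ q - Aᵀ *ᵥ p ∧ x ⬝ᵥ (q - Aᵀ *ᵥ p) = 0 := by
  classical
  obtain ⟨hfeas, hx0, hmin⟩ := hopt
  have hdir : ∀ z : Fin n → ℝ, A *ᵥ z = 0 → (∀ i, x i = 0 → 0 ≤ z i) → 0 ≤ q ⬝ᵥ z := by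
    intro z hAz hzp
    obtain ⟨t, ht, hxt⟩ := exists_pos_step x z hx0 hzp
    have hfeas' : A *ᵥ (x + t • z) = A *ᵥ d := by
      rw [mulVec_add, mulVec_smul, hAz, smul_zero, add_zero, hfeas]
    have hle := hmin (x + t • z) hfeas' hxt
    rw [dotProduct_add, dotProduct_smul, smul_eq_mul] at hle
    by_contra hneg
    push_neg at hneg
    nlinarith
  set g : (Fin m ⊕ Fin m) ⊕ Fin n → (Fin n → ℝ) :=
    Sum.elim (Sum.elim (fun i => A i) (fun i => -(A i)))
      (fun i => if x i = 0 then Pi.single i 1 else 0) with hg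
  obtain ⟨μ, hμ, hq⟩ := farkas_fintype g q (by
    intro z hz
    apply hdir
    · funext i
      have h1 := hz (Sum.inl (Sum.inl i))
      have h2 := hz (Sum.inl (Sum.inr i))
      simp only [hg, Sum.elim_inl, Sum.elim_inr, neg_dotProduct] at h1 h2
      have : (A *ᵥ z) i = A i ⬝ᵥ z := rfl
      rw [this, Pi.zero_apply]
      linarith
    · intro i hxi
      have h3 := hz (Sum.inr i)
      simp only [hg, Sum.elim_inr, hxi, if_true] at h3
      rwa [single_dotProduct, one_mul] at h3)
  set p : Fin m → ℝ := fun i => μ (Sum.inl (Sum.inl i)) - μ (Sum.inl (Sum.inr i)) with hp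
  have hrep : ∀ j, q j - (Aᵀ *ᵥ p) j = if x j = 0 then μ (Sum.inr j) else 0 := by
    intro j
    have hsum3 : (∑ i : Fin n, μ (Sum.inr i) * ((if x i = 0 then Pi.single i 1 else (0 : Fin n → ℝ)) j))
        = if x j = 0 then μ (Sum.inr j) else 0 := by
      rw [Finset.sum_eq_single j]
      · by_cases hxj : x j = 0 <;> simp [hxj, Pi.single_apply]
      · intro i _ hij
        by_cases hxi : x i = 0 <;> simp [hxi, Pi.single_apply, Ne.symm hij]
      · simp
    have hAp : (Aᵀ *ᵥ p) j = (∑ i, μ (Sum.inl (Sum.inl i)) * A i j)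
        - (∑ i, μ (Sum.inl (Sum.inr i)) * A i j) := by
      simp only [Matrix.mulVec, dotProduct, Matrix.transpose_apply, hp]
      rw [← Finset.sum_sub_distrib]
      exact Finset.sum_congr rfl fun i _ => by ring
    have hthis := congrFun hq j
    rw [Finset.sum_apply, Fintype.sum_sum_type, Fintype.sum_sum_type] at hthis
    simp only [hg, Sum.elim_inl, Sum.elim_inr, Pi.smul_apply, smul_eq_mul, Pi.neg_apply,
      mul_neg] at hthis
    rw [Finset.sum_neg_distrib, hsum3] at hthis
    rw [hAp]
    linarith [hthis]
  refine ⟨p, ?_, ?_⟩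
  · intro j
    have := hrep j
    simp only [Pi.zero_apply, Pi.sub_apply]
    rw [this]
    by_cases hxj : x j = 0 <;> simp [hxj, hμ (Sum.inr j)]
  · unfold dotProduct
    apply Finset.sum_eq_zero
    intro j _
    simp only [Pi.sub_apply]
    rw [hrep j]
    by_cases hxj : x j = 0 <;> simp [hxj]

lemma ortho_to_mul {k k' n : ℕ} (P : Matrix (Fin k) (Fin n) ℝ) (Q : Matrix (Fin k') (Fin n) ℝ)
    (h : ∀ wp wq, (Pᵀ *ᵥ wp) ⬝ᵥ (Qᵀ *ᵥ wq) = 0) : P * Qᵀ = 0 := by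
  ext i j
  have := h (Pi.single i 1) (Pi.single j 1)
  simpa [mulVec_single, dotProduct, Matrix.mul_apply, Matrix.transpose_apply] using this

lemma dot_transpose {k n : ℕ} (x : Fin n → ℝ) (P : Matrix (Fin k) (Fin n) ℝ) (p : Fin k → ℝ) :
    x ⬝ᵥ (Pᵀ *ᵥ p) = (P *ᵥ x) ⬝ᵥ p := by
  rw [dotProduct_mulVec, vecMul_transpose]

lemma dot_nonneg' {n : ℕ} {a b : Fin n → ℝ} (ha : 0 ≤ a) (hb : 0 ≤ b) : 0 ≤ a ⬝ᵥ b :=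
  Finset.sum_nonneg fun i _ => mul_nonneg (ha i) (hb i)

lemma kernel_decomp {m l r n : ℕ} (A : Matrix (Fin m) (Fin n) ℝ)
    (B : Matrix (Fin l) (Fin n) ℝ) (M : Matrix (Fin r) (Fin n) ℝ)
    (hBA : B * Aᵀ = 0) (hBM : B * Mᵀ = 0) (hMA : M * Aᵀ = 0) (hMM : M * Mᵀ = 1)
    (hspan : LinearMap.range (Aᵀ).mulVecLin ⊔ LinearMap.range (Bᵀ).mulVecLin ⊔
      LinearMap.range (Mᵀ).mulVecLin = ⊤)
    (z : Fin n → ℝ) (hz : B *ᵥ z = 0) : ∃ p, z = Aᵀ *ᵥ p + Mᵀ *ᵥ (M *ᵥ z) := by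
  have hmem : z ∈ (LinearMap.range (Aᵀ).mulVecLin ⊔ LinearMap.range (Bᵀ).mulVecLin ⊔
      LinearMap.range (Mᵀ).mulVecLin) := by
    rw [hspan]; trivial
  rw [Submodule.mem_sup] at hmem
  obtain ⟨y, hy, mw, hmw, hsum⟩ := hmem
  rw [Submodule.mem_sup] at hy
  obtain ⟨av, hav, bv, hbv, hy'⟩ := hy
  obtain ⟨a, rfl⟩ := LinearMap.mem_range.mp hav
  obtain ⟨b, rfl⟩ := LinearMap.mem_range.mp hbv
  obtain ⟨w, rfl⟩ := LinearMap.mem_range.mp hmw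
  rw [Matrix.mulVecLin_apply] at hsum
  rw [Matrix.mulVecLin_apply, Matrix.mulVecLin_apply] at hy'
  have hzdef : z = Aᵀ *ᵥ a + Bᵀ *ᵥ b + Mᵀ *ᵥ w := by rw [← hsum, ← hy']
  have hBb : (B * Bᵀ) *ᵥ b = 0 := by
    have h0 := hz
    rw [hzdef] at h0
    simpa [mulVec_add, mulVec_mulVec, hBA, hBM] using h0
  have hb0 : Bᵀ *ᵥ b = 0 := by
    have hdot : (Bᵀ *ᵥ b) ⬝ᵥ (Bᵀ *ᵥ b) = 0 := by
      rw [dotProduct_mulVec, vecMul_transpose, mulVec_mulVec, hBb, zero_dotProduct]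
    exact dotProduct_self_eq_zero.mp hdot
  have hw : M *ᵥ z = w := by
    rw [hzdef, hb0]
    simp [mulVec_add, mulVec_mulVec, hMA, hMM]
  refine ⟨a, ?_⟩
  rw [hw, hzdef, hb0]
  abel

end FarkasAux

/-- Parametric KKT conditions: existence of `(x̄, ȳ)` satisfying them is equivalent to
`v ∈ Φ(u)` and `u ∈ Ψ(v)`; moreover, any such pair is optimal for the almost
primal-dual problem pair. -/
theorem parametric_KKT {m l r n : ℕ}
    (A : Matrix (Fin m) (Fin n) ℝ) (B : Matrix (Fin l) (Fin n) ℝ)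
    (M : Matrix (Fin r) (Fin n) ℝ) (c d : Fin n → ℝ)
    (hd : 0 ≤ d) (hc : 0 ≤ c)
    (hA1 : Assumption1 A B M) (hA2 : Assumption2 M)
    (u v : Fin r → ℝ) (hu : u ∈ ThetaD B M c) (hv : v ∈ ThetaP A M d) :
    ((∃ xb yb : Fin n → ℝ,
        A *ᵥ xb = A *ᵥ d ∧ M *ᵥ xb = M *ᵥ d + v ∧ 0 ≤ xb ∧
        B *ᵥ yb = B *ᵥ c ∧ M *ᵥ yb = M *ᵥ c + u ∧ 0 ≤ yb ∧
        xb ⬝ᵥ yb = 0) ↔ (v ∈ Phi A M c d u ∧ u ∈ Psi B M c d v)) ∧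
      (∀ xb yb : Fin n → ℝ,
        A *ᵥ xb = A *ᵥ d → M *ᵥ xb = M *ᵥ d + v → 0 ≤ xb →
        B *ᵥ yb = B *ᵥ c → M *ᵥ yb = M *ᵥ c + u → 0 ≤ yb →
        xb ⬝ᵥ yb = 0 →
        ((∀ x' : Fin n → ℝ, A *ᵥ x' = A *ᵥ d → M *ᵥ x' = M *ᵥ d + v → 0 ≤ x' →
            c ⬝ᵥ xb ≤ c ⬝ᵥ x') ∧
          (∀ y' : Fin n → ℝ, B *ᵥ y' = B *ᵥ c → M *ᵥ y' = M *ᵥ c + u → 0 ≤ y' →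
            d ⬝ᵥ yb ≤ d ⬝ᵥ y'))) := by
  classical
  obtain ⟨h1, h2, h3, hspan⟩ := hA1
  have hMMm : M * Mᵀ = 1 := hA2
  have hABm : A * Bᵀ = 0 := ortho_to_mul _ _ h1
  have hBAm : B * Aᵀ = 0 := ortho_to_mul _ _ fun wb wa => by
    rw [dotProduct_comm]; exact h1 wa wb
  have hAMm : A * Mᵀ = 0 := ortho_to_mul _ _ h2
  have hMAm : M * Aᵀ = 0 := ortho_to_mul _ _ fun wm wa => by
    rw [dotProduct_comm]; exact h2 wa wm
  have hBMm : B * Mᵀ = 0 := ortho_to_mul _ _ h3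
  have hMBm : M * Bᵀ = 0 := ortho_to_mul _ _ fun wm wb => by
    rw [dotProduct_comm]; exact h3 wb wm
  have hspan' : LinearMap.range (Bᵀ).mulVecLin ⊔ LinearMap.range (Aᵀ).mulVecLin ⊔
      LinearMap.range (Mᵀ).mulVecLin = ⊤ := by
    rw [sup_comm (LinearMap.range (Bᵀ).mulVecLin) (LinearMap.range (Aᵀ).mulVecLin)]
    exact hspan
  have repD : ∀ y : Fin n → ℝ, B *ᵥ y = B *ᵥ c → ∃ p, ∀ x : Fin n → ℝ,
      x ⬝ᵥ y = x ⬝ᵥ c + (A *ᵥ x) ⬝ᵥ p + (M *ᵥ x) ⬝ᵥ (M *ᵥ y - M *ᵥ c) := by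
    intro y hy
    obtain ⟨p, hp⟩ := kernel_decomp A B M hBAm hBMm hMAm hMMm hspan (y - c)
      (by rw [mulVec_sub, hy, sub_self])
    refine ⟨p, fun x => ?_⟩
    have hyc : y = c + (Aᵀ *ᵥ p + Mᵀ *ᵥ (M *ᵥ (y - c))) := by
      rw [← hp]; abel
    conv_lhs => rw [hyc]
    rw [dotProduct_add, dotProduct_add, dot_transpose, dot_transpose, mulVec_sub, add_assoc]
  have repP : ∀ x : Fin n → ℝ, A *ᵥ x = A *ᵥ d → ∃ s, ∀ y : Fin n → ℝ,
      y ⬝ᵥ x = y ⬝ᵥ d + (B *ᵥ y) ⬝ᵥ s + (M *ᵥ y) ⬝ᵥ (M *ᵥ x - M *ᵥ d) := by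
    intro x hx
    obtain ⟨s, hs⟩ := kernel_decomp B A M hABm hAMm hMBm hMMm hspan' (x - d)
      (by rw [mulVec_sub, hx, sub_self])
    refine ⟨s, fun y => ?_⟩
    have hxd : x = d + (Bᵀ *ᵥ s + Mᵀ *ᵥ (M *ᵥ (x - d))) := by
      rw [← hs]; abel
    conv_lhs => rw [hxd]
    rw [dotProduct_add, dotProduct_add, dot_transpose, dot_transpose, mulVec_sub, add_assoc]
  refine ⟨⟨?_, ?_⟩, ?_⟩
  · rintro ⟨xb, yb, hAxb, hMxb, hxb0, hByb, hMyb, hyb0, hcomp⟩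
    obtain ⟨p, hp⟩ := repD yb hByb
    obtain ⟨s, hs⟩ := repP xb hAxb
    have hMybc : M *ᵥ yb - M *ᵥ c = u := by rw [hMyb]; abel
    have hMxbd : M *ᵥ xb - M *ᵥ d = v := by rw [hMxb]; abel
    constructor
    · refine ⟨xb, ⟨hAxb, hxb0, ?_⟩, by rw [mulVec_sub, hMxb]; abel⟩
      intro x' hx' hx'0
      have key : ∀ x : Fin n → ℝ, A *ᵥ x = A *ᵥ d →
          (c + Mᵀ *ᵥ u) ⬝ᵥ x = x ⬝ᵥ yb - (A *ᵥ d) ⬝ᵥ p := by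
        intro x hx
        have hxy := hp x
        rw [hx, hMybc] at hxy
        rw [add_dotProduct, dotProduct_comm c x, dotProduct_comm (Mᵀ *ᵥ u) x, dot_transpose]
        linarith [hxy]
      have h0 : 0 ≤ x' ⬝ᵥ yb := dot_nonneg' hx'0 hyb0
      rw [key xb hAxb, key x' hx', hcomp]
      linarith
    · refine ⟨yb, ⟨hByb, hyb0, ?_⟩, by rw [mulVec_sub, hMyb]; abel⟩
      intro y' hy' hy'0
      have key : ∀ y : Fin n → ℝ, B *ᵥ y = B *ᵥ c →
          (d + Mᵀ *ᵥ v) ⬝ᵥ y = y ⬝ᵥ xb - (B *ᵥ c) ⬝ᵥ s := by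
        intro y hy
        have hyx := hs y
        rw [hy, hMxbd] at hyx
        rw [add_dotProduct, dotProduct_comm d y, dotProduct_comm (Mᵀ *ᵥ v) y, dot_transpose]
        linarith [hyx]
      have h0 : 0 ≤ y' ⬝ᵥ xb := dot_nonneg' hy'0 hxb0
      have hcomp' : yb ⬝ᵥ xb = 0 := by rw [dotProduct_comm]; exact hcomp
      rw [key yb hByb, key y' hy', hcomp']
      linarith
  · rintro ⟨⟨xs, hxopt, hveq⟩, -⟩
    obtain ⟨p, hge, hcs⟩ := exists_multipliers A d (c + Mᵀ *ᵥ u) xs hxopt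
    refine ⟨xs, c + Mᵀ *ᵥ u - Aᵀ *ᵥ p, hxopt.1, ?_, hxopt.2.1, ?_, ?_, hge, hcs⟩
    · rw [hveq, mulVec_sub]; abel
    · rw [mulVec_sub, mulVec_add, mulVec_mulVec, mulVec_mulVec, hBMm, hBAm,
        Matrix.zero_mulVec, Matrix.zero_mulVec, add_zero, sub_zero]
    · rw [mulVec_sub, mulVec_add, mulVec_mulVec, mulVec_mulVec, hMAm, hMMm,
        Matrix.zero_mulVec, Matrix.one_mulVec, sub_zero]
  · intro xb yb hAxb hMxb hxb0 hByb hMyb hyb0 hcomp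
    obtain ⟨p, hp⟩ := repD yb hByb
    obtain ⟨s, hs⟩ := repP xb hAxb
    have hMybc : M *ᵥ yb - M *ᵥ c = u := by rw [hMyb]; abel
    have hMxbd : M *ᵥ xb - M *ᵥ d = v := by rw [hMxb]; abel
    constructor
    · intro x' hAx' hMx' hx'0
      have e1 := hp xb
      rw [hAxb, hMxb, hMybc, hcomp] at e1
      have e2 := hp x'
      rw [hAx', hMx', hMybc] at e2
      have h0 : 0 ≤ x' ⬝ᵥ yb := dot_nonneg' hx'0 hyb0
      rw [dotProduct_comm c xb, dotProduct_comm c x']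
      linarith [e1, e2]
    · intro y' hBy' hMy' hy'0
      have e1 := hs yb
      have hcomp' : yb ⬝ᵥ xb = 0 := by rw [dotProduct_comm]; exact hcomp
      rw [hByb, hMyb, hMxbd, hcomp'] at e1
      have e2 := hs y'
      rw [hBy', hMy', hMxbd] at e2
      have h0 : 0 ≤ y' ⬝ᵥ xb := dot_nonneg' hy'0 hxb0
      rw [dotProduct_comm d yb, dotProduct_comm d y']
      linarith [e1, e2]
end
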